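/- In the Heisenberg group H(ℝ), for every positive integer n the set of subgroups Δ with c(H(ℤ), Δ) = n is finite, where c(A,B) = [A : A ∩ B]·[B : A ∩ B]. -/

import Mathlib

/-- The Heisenberg group over a commutative ring `R`: upper unitriangular 3×3
matrices, recorded by their off-diagonal entries `x` (entry (1,2)),
`y` (entry (2,3)) and `z` (entry (1,3)). -/
@[ext]
structure Heis (R : Type*) where
  x : R
  y : R
  z : R

namespace Heis

variable {R : Type*} [CommRing R]

instance : Mul (Heis R) := ⟨fun a b => ⟨a.x + b.x, a.y + b.y, a.z + b.z + a.x * b.y⟩⟩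
instance : One (Heis R) := ⟨⟨0, 0, 0⟩⟩
instance : Inv (Heis R) := ⟨fun a => ⟨-a.x, -a.y, -a.z + a.x * a.y⟩⟩

@[simp] theorem mul_x (a b : Heis R) : (a * b).x = a.x + b.x := rfl
@[simp] theorem mul_y (a b : Heis R) : (a * b).y = a.y + b.y := rfl
@[simp] theorem mul_z (a b : Heis R) : (a * b).z = a.z + b.z + a.x * b.y := rfl
@[simp] theorem one_x : (1 : Heis R).x = 0 := rfl
@[simp] theorem one_y : (1 : Heis R).y = 0 := rfl
@[simp] theorem one_z : (1 : Heis R).z = 0 := rfl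
@[simp] theorem inv_x (a : Heis R) : a⁻¹.x = -a.x := rfl
@[simp] theorem inv_y (a : Heis R) : a⁻¹.y = -a.y := rfl
@[simp] theorem inv_z (a : Heis R) : a⁻¹.z = -a.z + a.x * a.y := rfl

instance : Group (Heis R) where
  mul_assoc a b c := by ext <;> simp <;> ring
  one_mul a := by ext <;> simp
  mul_one a := by ext <;> simp
  inv_mul_cancel a := by ext <;> simp

end Heis

/-- The integral Heisenberg lattice `H(ℤ)` inside `H(ℝ)`. -/
def HeisZ : Subgroup (Heis ℝ) where
  carrier := {a | (∃ m : ℤ, (m : ℝ) = a.x) ∧ (∃ m : ℤ, (m : ℝ) = a.y) ∧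
    ∃ m : ℤ, (m : ℝ) = a.z}
  one_mem' := ⟨⟨0, by simp⟩, ⟨0, by simp⟩, ⟨0, by simp⟩⟩
  mul_mem' := by
    rintro a b ⟨⟨ax, hax⟩, ⟨ay, hay⟩, ⟨az, haz⟩⟩ ⟨⟨bx, hbx⟩, ⟨by', hby⟩, ⟨bz, hbz⟩⟩
    exact ⟨⟨ax + bx, by push_cast; rw [hax, hbx]; simp⟩,
      ⟨ay + by', by push_cast; rw [hay, hby]; simp⟩,
      ⟨az + bz + ax * by', by push_cast; rw [haz, hbz, hax, hby]; simp⟩⟩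
  inv_mem' := by
    rintro a ⟨⟨ax, hax⟩, ⟨ay, hay⟩, ⟨az, haz⟩⟩
    exact ⟨⟨-ax, by push_cast; rw [hax]; simp⟩, ⟨-ay, by push_cast; rw [hay]; simp⟩,
      ⟨-az + ax * ay, by push_cast; rw [haz, hax, hay]; simp⟩⟩

/-!
If `c(H(ℤ), Δ) = n`, both relative indices are at most `n`, so for `s = n!` the `s`-th power of
every element of `H(ℤ)` lies in `Δ` and the `s`-th power of every element of `Δ` lies in `H(ℤ)`.
In terms of the dilations `δₜ (x, y, z) = (t x, t y, t² z)` this gives `δₛ H(ℤ) ≤ Δ` and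
`δ₂ₛ Δ ≤ H(ℤ)`: the first because `δₛ a` is a product of `s`-th powers of elements of `H(ℤ)`,
the second because the coordinates of `δ₂ₛ a` are integral polynomials in those of `a ^ s`.
So `δ₂ₛ` embeds these `Δ` into the subgroups between `δ_{2s²} H(ℤ)` and `H(ℤ)`; there are
finitely many of them, as `δₘ H(ℤ)` contains the kernel of reduction `H(ℤ) → H(ℤ/m²)`.
-/

namespace Subgroup

open scoped Nat Pointwise

variable {G : Type*} [Group G]

theorem coe_mul_coe_of_le {H L : Subgroup G} (hHL : H ≤ L) : (L : Set G) * (H : Set G) = L :=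
  ((Set.mul_subset_mul_left hHL).trans_eq (coe_mul_coe L)).antisymm
    (Set.subset_mul_left _ H.one_mem)

theorem finite_Ici_of_finiteIndex (H : Subgroup G) [H.FiniteIndex] : (Set.Ici H).Finite := by
  refine Set.Finite.of_injOn (f := fun L : Subgroup G ↦ (QuotientGroup.mk '' L : Set (G ⧸ H)))
    (Set.mapsTo_univ _ _) (fun L₁ h₁ L₂ h₂ heq ↦ SetLike.coe_injective ?_) Set.finite_univ
  rw [← coe_mul_coe_of_le h₁, ← coe_mul_coe_of_le h₂, ← QuotientGroup.preimage_image_mk_eq_mul,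
    ← QuotientGroup.preimage_image_mk_eq_mul]
  exact congrArg _ heq

theorem finite_Icc_of_relIndex_ne_zero {H K : Subgroup G} (h : H.relIndex K ≠ 0) :
    (Set.Icc H K).Finite := by
  have : (H.subgroupOf K).FiniteIndex := ⟨h⟩
  refine Set.Finite.of_injOn (f := fun L ↦ L.subgroupOf K) (fun L hL ↦ subgroupOf_mono K hL.1)
    (fun L₁ h₁ L₂ h₂ heq ↦ ?_) (H.subgroupOf K).finite_Ici_of_finiteIndex
  simpa [inf_of_le_left h₁.2, inf_of_le_left h₂.2] using subgroupOf_inj.mp heq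

theorem pow_factorial_mem_of_relIndex_le {H K : Subgroup G} {n : ℕ} (h0 : H.relIndex K ≠ 0)
    (hn : H.relIndex K ≤ n) {a : G} (ha : a ∈ K) : a ^ n ! ∈ H :=
  (pow_mem_of_relIndex_ne_zero_of_dvd h0 ha fun _ hm hle ↦ Nat.dvd_factorial hm (hle.trans hn)).1

end Subgroup

namespace Heis

variable {R S : Type*} [CommRing R] [CommRing S]

instance [Finite R] : Finite (Heis R) :=
  .of_injective (fun a ↦ (a.x, a.y, a.z)) fun _ _ h ↦ by
    simp only [Prod.mk.injEq] at h
    exact Heis.ext h.1 h.2.1 h.2.2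

@[simps]
def map (f : R →+* S) : Heis R →* Heis S where
  toFun a := ⟨f a.x, f a.y, f a.z⟩
  map_one' := by ext <;> simp
  map_mul' _ _ := by ext <;> simp

@[simp]
theorem map_mk (f : R →+* S) (x y z : R) : map f ⟨x, y, z⟩ = ⟨f x, f y, f z⟩ := rfl

theorem map_injective {f : R →+* S} (hf : Function.Injective f) : Function.Injective (map f) :=
  fun _ _ h ↦ Heis.ext (hf (congrArg x h)) (hf (congrArg y h)) (hf (congrArg z h))

@[simps]
def dilate (t : R) : Heis R →* Heis R where
  toFun a := ⟨t * a.x, t * a.y, t ^ 2 * a.z⟩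
  map_one' := by ext <;> simp
  map_mul' _ _ := by ext <;> simp <;> ring

theorem dilate_mul (s t : R) : dilate (s * t) = (dilate s).comp (dilate t) := by
  ext a <;> simp <;> ring

theorem dilate_injective [IsDomain R] {t : R} (ht : t ≠ 0) : Function.Injective (dilate t) :=
  fun _ _ h ↦ Heis.ext (mul_left_cancel₀ ht (congrArg x h)) (mul_left_cancel₀ ht (congrArg y h))
    (mul_left_cancel₀ (pow_ne_zero 2 ht) (congrArg z h))

theorem pow_x (a : Heis R) (k : ℕ) : (a ^ k).x = k * a.x := by
  induction k with
  | zero => simp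
  | succ k ih => simp [pow_succ, ih]; ring

theorem pow_y (a : Heis R) (k : ℕ) : (a ^ k).y = k * a.y := by
  induction k with
  | zero => simp
  | succ k ih => simp [pow_succ, ih]; ring

theorem pow_z (a : Heis R) (k : ℕ) : (a ^ k).z = k * a.z + k.choose 2 * (a.x * a.y) := by
  induction k with
  | zero => simp
  | succ k ih => simp [pow_succ, ih, pow_x, Nat.choose_succ_succ]; ring

theorem dilate_natCast (a : Heis R) (s : ℕ) :
    dilate (s : R) a = ⟨a.x, 0, 0⟩ ^ s * ⟨0, a.y, 0⟩ ^ s * (⟨0, 0, a.z - a.x * a.y⟩ ^ s) ^ s := by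
  ext <;> simp [pow_x, pow_y, pow_z, ← pow_mul]; ring

theorem dilate_two_mul_natCast (a : Heis R) (s : ℕ) :
    dilate (2 * s : R) a = ⟨2 * (a ^ s).x, 2 * (a ^ s).y,
      4 * s * (a ^ s).z - 2 * (s - 1) * ((a ^ s).x * (a ^ s).y)⟩ := by
  have hchoose : (s.choose 2 : R) * 2 = s * (s - 1) := by
    induction s with
    | zero => simp
    | succ s ih => simp [Nat.choose_succ_succ]; linear_combination ih
  ext <;> simp [pow_x, pow_y, pow_z]
  · ring
  · ring
  · linear_combination (-2 * s * (a.x * a.y)) * hchoose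

end Heis

open Heis

theorem heisZ_eq_range : HeisZ = (Heis.map (Int.castRingHom ℝ)).range := by
  ext g
  constructor
  · rintro ⟨⟨x, hx⟩, ⟨y, hy⟩, ⟨z, hz⟩⟩
    exact ⟨⟨x, y, z⟩, Heis.ext hx hy hz⟩
  · rintro ⟨a, rfl⟩
    exact ⟨⟨a.x, rfl⟩, ⟨a.y, rfl⟩, ⟨a.z, rfl⟩⟩

theorem map_dilate_heisZ_le_of_pow_mem {Δ : Subgroup (Heis ℝ)} {s : ℕ}
    (h : ∀ g ∈ HeisZ, g ^ s ∈ Δ) : HeisZ.map (dilate (s : ℝ)) ≤ Δ := by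
  have hpow : ∀ b, Heis.map (Int.castRingHom ℝ) b ^ s ∈ Δ :=
    fun b ↦ h _ (heisZ_eq_range ▸ ⟨b, rfl⟩)
  rintro _ ⟨g, hg, rfl⟩
  obtain ⟨a, rfl⟩ := heisZ_eq_range ▸ hg
  rw [dilate_natCast]
  refine mul_mem (mul_mem ?_ ?_) ?_
  · simpa using hpow ⟨a.x, 0, 0⟩
  · simpa using hpow ⟨0, a.y, 0⟩
  · simpa using hpow (⟨0, 0, a.z - a.x * a.y⟩ ^ s)

theorem map_dilate_two_mul_le_heisZ_of_pow_mem {Δ : Subgroup (Heis ℝ)} {s : ℕ}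
    (h : ∀ d ∈ Δ, d ^ s ∈ HeisZ) : Δ.map (dilate ((2 * s : ℕ) : ℝ)) ≤ HeisZ := by
  rintro _ ⟨d, hd, rfl⟩
  obtain ⟨b, hb⟩ := heisZ_eq_range ▸ h d hd
  rw [heisZ_eq_range, Nat.cast_mul, Nat.cast_ofNat, dilate_two_mul_natCast, ← hb]
  exact ⟨⟨2 * b.x, 2 * b.y, 4 * s * b.z - 2 * (s - 1) * (b.x * b.y)⟩, by ext <;> simp⟩

theorem relIndex_map_dilate_heisZ_ne_zero {m : ℕ} (hm : m ≠ 0) :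
    (HeisZ.map (dilate (m : ℝ))).relIndex HeisZ ≠ 0 := by
  have : NeZero (m ^ 2) := ⟨pow_ne_zero 2 hm⟩
  set ι := Heis.map (Int.castRingHom ℝ)
  set K := (Heis.map (Int.castRingHom (ZMod (m ^ 2)))).ker
  have hK : K.map ι ≤ HeisZ.map (dilate (m : ℝ)) := by
    rintro _ ⟨a, ha, rfl⟩
    have hdvd : ∀ c : ℤ, (c : ZMod (m ^ 2)) = 0 → ∃ u : ℤ, c = m ^ 2 * u := fun c hc ↦ by
      exact_mod_cast (ZMod.intCast_zmod_eq_zero_iff_dvd c (m ^ 2)).mp hc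
    rw [SetLike.mem_coe, MonoidHom.mem_ker] at ha
    obtain ⟨u, hu⟩ := hdvd a.x (by simpa using congrArg Heis.x ha)
    obtain ⟨v, hv⟩ := hdvd a.y (by simpa using congrArg Heis.y ha)
    obtain ⟨w, hw⟩ := hdvd a.z (by simpa using congrArg Heis.z ha)
    refine ⟨ι ⟨m * u, m * v, w⟩, heisZ_eq_range ▸ ⟨_, rfl⟩, ?_⟩
    ext <;> simp [ι, hu, hv, hw] <;> ring
  have hι : (K.map ι).relIndex HeisZ = K.index := by
    rw [heisZ_eq_range, MonoidHom.range_eq_map,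
      Subgroup.relIndex_map_map_of_injective _ _ (map_injective Int.cast_injective),
      Subgroup.relIndex_top_right]
  exact mt (Subgroup.relIndex_eq_zero_of_le_left hK) (hι ▸ Subgroup.FiniteIndex.index_ne_zero)

theorem finite_setOf_map_dilate_heisZ_le {s t : ℕ} (hs : s ≠ 0) (ht : t ≠ 0) :
    {Δ : Subgroup (Heis ℝ) |
      HeisZ.map (dilate (s : ℝ)) ≤ Δ ∧ Δ.map (dilate (t : ℝ)) ≤ HeisZ}.Finite := by
  have hinj : Function.Injective (Subgroup.map (dilate (t : ℝ))) :=
    Subgroup.map_injective (dilate_injective (Nat.cast_ne_zero.mpr ht))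
  refine Set.Finite.of_injOn ?_ hinj.injOn <| Subgroup.finite_Icc_of_relIndex_ne_zero <|
    relIndex_map_dilate_heisZ_ne_zero (mul_ne_zero ht hs)
  refine fun Δ hΔ ↦ ⟨?_, hΔ.2⟩
  rw [Nat.cast_mul, dilate_mul, ← Subgroup.map_map]
  exact Subgroup.map_mono hΔ.1

/-- In the Heisenberg group `H(ℝ)`, for every positive integer `n` the set of
subgroups `Δ` with commensurability index
`c(H(ℤ), Δ) = [H(ℤ) : H(ℤ) ∩ Δ]·[Δ : H(ℤ) ∩ Δ] = n` is finite. -/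
theorem heisenberg_commensurable_subgroups_finite (n : ℕ) (hn : 0 < n) :
    {Δ : Subgroup (Heis ℝ) |
      Subgroup.relIndex Δ HeisZ * Subgroup.relIndex HeisZ Δ = n}.Finite := by
  refine (finite_setOf_map_dilate_heisZ_le (Nat.factorial_ne_zero n)
    (mul_ne_zero two_ne_zero (Nat.factorial_ne_zero n))).subset fun Δ (hc : _ * _ = n) ↦ ?_
  have h₁ : Δ.relIndex HeisZ ≠ 0 := left_ne_zero_of_mul (hc ▸ hn.ne')
  have h₂ : HeisZ.relIndex Δ ≠ 0 := right_ne_zero_of_mul (hc ▸ hn.ne')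
  exact ⟨map_dilate_heisZ_le_of_pow_mem fun _ hg ↦
      Subgroup.pow_factorial_mem_of_relIndex_le h₁ (Nat.le_of_dvd hn (Dvd.intro _ hc)) hg,
    map_dilate_two_mul_le_heisZ_of_pow_mem fun _ hd ↦
      Subgroup.pow_factorial_mem_of_relIndex_le h₂ (Nat.le_of_dvd hn (Dvd.intro_left _ hc)) hd⟩
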